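/- Conversely, if there exist a factorization H_B = H_L ⊗ H_R, a pure state |φ⟩ ∈ H_A ⊗ H_L, and a density matrix ρ_R on H_R such that (1_A ⊗ Φ)(|u_ρ⟩⟨u_ρ|) = |φ⟩⟨φ|_{AL} ⊗ ρ_R, then I_c(ρ,Φ) = S(ρ). -/

import Mathlib

/-!
Conjugation by the isometry `1_A ⊗ V` preserves entropies and partial traces over `A`, so the
joint output `σ = (1_A ⊗ Φ)(|u⟩⟨u|)` has entropy `S(|φ⟩⟨φ| ⊗ ρ_R) = S(ρ_R)` and the output
`Φ(ρ) = Tr_A σ` has entropy `S(τ ⊗ ρ_R) = S(τ) + S(ρ_R)`, where `τ = Tr_A |φ⟩⟨φ|`. On the other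
hand the two marginals of a pure state have the same entropy, and since `Φ` is trace preserving
and `V` an isometry, `Tr_B |u⟩⟨u| = Tr_B σ = Tr_L |φ⟩⟨φ|`; hence `S(ρ) = S(τ)`.

Entropies are compared through characteristic polynomials: `X^|n| χ(PQ) = X^|m| χ(QP)` shows
that `M M†` and `M† M`, and `P A P†` and `A` for an isometry `P`, have the same nonzero
eigenvalues, and `0 log 0 = 0`.
-/

open Matrix Kronecker BigOperators
open scoped ComplexOrder

noncomputable section

/-- Partial trace over the second (right) tensor factor. -/
def ptraceRight {m n : Type*} [Fintype n]
    (ρ : Matrix (m × n) (m × n) ℂ) : Matrix m m ℂ :=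
  fun i j => ∑ k : n, ρ (i, k) (j, k)

/-- Partial trace over the first (left) tensor factor. -/
def ptraceLeft {m n : Type*} [Fintype m]
    (ρ : Matrix (m × n) (m × n) ℂ) : Matrix n n ℂ :=
  fun i j => ∑ k : m, ρ (k, i) (k, j)

/-- Partial trace of a tripartite state over the last factor. -/
def trC {a b c : Type*} [Fintype c]
    (ρ : Matrix (a × b × c) (a × b × c) ℂ) : Matrix (a × b) (a × b) ℂ :=
  fun i j => ∑ k : c, ρ (i.1, i.2, k) (j.1, j.2, k)

/-- Partial trace of a tripartite state over the first and last factors. -/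
def trAC {a b c : Type*} [Fintype a] [Fintype c]
    (ρ : Matrix (a × b × c) (a × b × c) ℂ) : Matrix b b ℂ :=
  fun i j => ∑ x : a, ∑ k : c, ρ (x, i, k) (x, j, k)

/-- A density matrix: positive semidefinite with unit trace. -/
def IsDensity {n : Type*} [Fintype n] (ρ : Matrix n n ℂ) : Prop :=
  ρ.PosSemidef ∧ ρ.trace = 1

/-- Von Neumann entropy `S(ρ) = -Tr (ρ log ρ)`, computed from the eigenvalues. -/
def vNEntropy {n : Type*} [Fintype n] [DecidableEq n] (ρ : Matrix n n ℂ) : ℝ :=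
  if h : ρ.IsHermitian then -∑ i, (h.eigenvalues i * Real.log (h.eigenvalues i)) else 0

/-- `Φ ⊗ 1` : a map on the first tensor factor extended by the identity. -/
def tensorId {h h' k : Type*}
    (Φ : Matrix h h ℂ → Matrix h' h' ℂ)
    (ρ : Matrix (h × k) (h × k) ℂ) : Matrix (h' × k) (h' × k) ℂ :=
  fun i j => Φ (fun x y => ρ (x, i.2) (y, j.2)) i.1 j.1

/-- `1 ⊗ Φ` : a map on the second tensor factor extended by the identity. -/
def idTensor {h h' k : Type*}
    (Φ : Matrix h h ℂ → Matrix h' h' ℂ)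
    (ρ : Matrix (k × h) (k × h) ℂ) : Matrix (k × h') (k × h') ℂ :=
  fun i j => Φ (fun x y => ρ (i.1, x) (j.1, y)) i.2 j.2

/-- A quantum channel: linear, trace preserving and completely positive map. -/
structure QChannel (m n : Type*) [Fintype m] [Fintype n] where
  map : Matrix m m ℂ → Matrix n n ℂ
  linear : ∀ (a b : ℂ) (ρ σ : Matrix m m ℂ), map (a • ρ + b • σ) = a • map ρ + b • map σ
  trace_preserving : ∀ ρ : Matrix m m ℂ, (map ρ).trace = ρ.trace
  completely_positive : ∀ (d : ℕ) (ρ : Matrix (m × Fin d) (m × Fin d) ℂ),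
    ρ.PosSemidef → (tensorId map ρ).PosSemidef

/-- Pure state projector `|v⟩⟨v|`. -/
def proj {n : Type*} (v : n → ℂ) : Matrix n n ℂ := Matrix.vecMulVec v (star v)

/-- Unit vector. -/
def IsUnit' {n : Type*} [Fintype n] (v : n → ℂ) : Prop := ∑ i, Complex.normSq (v i) = 1

open Polynomial Real

namespace Matrix

lemma IsHermitian.kronecker {n m : Type*} {A : Matrix n n ℂ} {B : Matrix m m ℂ}
    (hA : A.IsHermitian) (hB : B.IsHermitian) : (A ⊗ₖ B).IsHermitian := by
  rw [IsHermitian, conjTranspose_kronecker, hA.eq, hB.eq]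

lemma IsHermitian.of_mul_mul_conjTranspose {n m : Type*} [Fintype n] [DecidableEq n] [Fintype m]
    {P : Matrix m n ℂ} (hP : Pᴴ * P = 1) {A : Matrix n n ℂ} (h : (P * A * Pᴴ).IsHermitian) :
    A.IsHermitian := by
  simpa [Matrix.mul_assoc, hP, ← Matrix.mul_assoc Pᴴ P] using isHermitian_conjTranspose_mul_mul P h

lemma isHermitian_diagonal_ofReal {n : Type*} [DecidableEq n] (d : n → ℝ) :
    (diagonal fun i => (d i : ℂ)).IsHermitian :=
  isHermitian_diagonal_iff.mpr fun i => Complex.conj_ofReal (d i)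

lemma IsHermitian.sum_eigenvalues_eq_one {n : Type*} [Fintype n] [DecidableEq n]
    {A : Matrix n n ℂ} (hA : A.IsHermitian) (h1 : A.trace = 1) : ∑ i, hA.eigenvalues i = 1 := by
  have h := hA.trace_eq_sum_eigenvalues.symm.trans h1
  rw [← RCLike.ofReal_sum] at h
  exact RCLike.ofReal_injective (h.trans RCLike.ofReal_one.symm)

end Matrix

section Entropy

variable {n m : Type*} [Fintype n] [DecidableEq n] [Fintype m] [DecidableEq m]

lemma vNEntropy_eq_sum_negMulLog {A : Matrix n n ℂ} (hA : A.IsHermitian) :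
    vNEntropy A = ∑ i, negMulLog (hA.eigenvalues i) := by
  simp [vNEntropy, hA, negMulLog]

lemma vNEntropy_eq_sum_roots_charpoly {A : Matrix n n ℂ} (hA : A.IsHermitian) :
    vNEntropy A = (A.charpoly.roots.map fun z => negMulLog z.re).sum := by
  rw [vNEntropy_eq_sum_negMulLog hA, hA.roots_charpoly_eq_eigenvalues, Multiset.map_map]
  simp [Function.comp_def]

lemma vNEntropy_eq_of_X_pow_mul_charpoly_eq {A : Matrix n n ℂ} {B : Matrix m m ℂ}
    (hA : A.IsHermitian) (hB : B.IsHermitian) {k l : ℕ}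
    (h : X ^ k * A.charpoly = X ^ l * B.charpoly) : vNEntropy A = vNEntropy B := by
  have hroots := congrArg roots h
  rw [roots_mul (mul_ne_zero (pow_ne_zero _ X_ne_zero) A.charpoly_monic.ne_zero),
    roots_mul (mul_ne_zero (pow_ne_zero _ X_ne_zero) B.charpoly_monic.ne_zero),
    roots_X_pow, roots_X_pow] at hroots
  simpa [vNEntropy_eq_sum_roots_charpoly, hA, hB, Multiset.map_nsmul, Multiset.sum_nsmul] using
    congrArg (fun s => (s.map fun z : ℂ => negMulLog z.re).sum) hroots

lemma vNEntropy_mul_mul_conjTranspose {P : Matrix m n ℂ} (hP : Pᴴ * P = 1) {A : Matrix n n ℂ}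
    (hA : A.IsHermitian) : vNEntropy (P * A * Pᴴ) = vNEntropy A :=
  vNEntropy_eq_of_X_pow_mul_charpoly_eq (isHermitian_mul_mul_conjTranspose P hA) hA <| by
    simpa [Matrix.mul_assoc, hP] using charpoly_mul_comm' P (A * Pᴴ)

lemma vNEntropy_reindex (e : n ≃ m) {A : Matrix n n ℂ} (hA : A.IsHermitian) :
    vNEntropy (reindex e e A) = vNEntropy A :=
  vNEntropy_eq_of_X_pow_mul_charpoly_eq (hA.submatrix e.symm) hA (k := 0) (l := 0) <| by
    rw [charpoly_reindex]

lemma vNEntropy_transpose {A : Matrix n n ℂ} (hA : A.IsHermitian) :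
    vNEntropy Aᵀ = vNEntropy A :=
  vNEntropy_eq_of_X_pow_mul_charpoly_eq hA.transpose hA (k := 0) (l := 0) <| by
    rw [charpoly_transpose]

lemma vNEntropy_diagonal (d : n → ℝ) :
    vNEntropy (diagonal fun i => (d i : ℂ)) = ∑ i, negMulLog (d i) := by
  rw [vNEntropy_eq_sum_roots_charpoly (isHermitian_diagonal_ofReal _),
    charpoly_diagonal, roots_prod _ _ (by simp [Finset.prod_ne_zero_iff, X_sub_C_ne_zero])]
  simp

lemma vNEntropy_kronecker {A : Matrix n n ℂ} {B : Matrix m m ℂ} (hA : A.IsHermitian)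
    (hB : B.IsHermitian) (hA1 : A.trace = 1) (hB1 : B.trace = 1) :
    vNEntropy (A ⊗ₖ B) = vNEntropy A + vNEntropy B := by
  set U : Matrix (n × m) (n × m) ℂ :=
    (hA.eigenvectorUnitary : Matrix n n ℂ) ⊗ₖ (hB.eigenvectorUnitary : Matrix m m ℂ)
  have hU : Uᴴ * U = 1 := by
    rw [conjTranspose_kronecker, ← mul_kronecker_mul, ← star_eq_conjTranspose,
      ← star_eq_conjTranspose, Unitary.coe_star_mul_self, Unitary.coe_star_mul_self,
      one_kronecker_one]
  have hdiag : A ⊗ₖ B =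
      U * diagonal (fun p => ((hA.eigenvalues p.1 * hB.eigenvalues p.2 : ℝ) : ℂ)) * Uᴴ := by
    conv_lhs => rw [hA.spectral_theorem, hB.spectral_theorem]
    simp [U, conjTranspose_kronecker, mul_kronecker_mul, diagonal_kronecker_diagonal,
      star_eq_conjTranspose]
  rw [hdiag, vNEntropy_mul_mul_conjTranspose hU (isHermitian_diagonal_ofReal _),
    vNEntropy_diagonal, Fintype.sum_prod_type, vNEntropy_eq_sum_negMulLog hA,
    vNEntropy_eq_sum_negMulLog hB]
  simp only [negMulLog_mul, Finset.sum_add_distrib, ← Finset.mul_sum, ← Finset.sum_mul,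
    hA.sum_eigenvalues_eq_one hA1, hB.sum_eigenvalues_eq_one hB1, one_mul]

end Entropy

section PureState

lemma proj_eq_replicateCol_mul_conjTranspose {n : Type*} (v : n → ℂ) :
    proj v = replicateCol Unit v * (replicateCol Unit v)ᴴ := by
  rw [conjTranspose_replicateCol, proj, vecMulVec_eq Unit]

lemma isHermitian_proj {n : Type*} [Fintype n] (v : n → ℂ) : (proj v).IsHermitian := by
  rw [proj_eq_replicateCol_mul_conjTranspose]
  exact isHermitian_mul_conjTranspose_self _

variable {n : Type*} [Fintype n]

lemma conjTranspose_replicateCol_mul_self {v : n → ℂ} (hv : IsUnit' v) :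
    (replicateCol Unit v)ᴴ * replicateCol Unit v = 1 := by
  ext i j
  simp only [conjTranspose_replicateCol, mul_apply, replicateRow_apply, replicateCol_apply,
    Pi.star_apply, one_apply_eq, Complex.star_def, ← Complex.normSq_eq_conj_mul_self]
  exact_mod_cast hv

lemma trace_proj {v : n → ℂ} (hv : IsUnit' v) : (proj v).trace = 1 := by
  rw [proj_eq_replicateCol_mul_conjTranspose, trace_mul_comm,
    conjTranspose_replicateCol_mul_self hv, trace_one]
  simp

lemma vNEntropy_proj [DecidableEq n] {v : n → ℂ} (hv : IsUnit' v) : vNEntropy (proj v) = 0 := by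
  have h := vNEntropy_mul_mul_conjTranspose (conjTranspose_replicateCol_mul_self hv)
    (isHermitian_one (n := Unit) (α := ℂ))
  rw [Matrix.mul_one, ← proj_eq_replicateCol_mul_conjTranspose] at h
  rw [h]
  simpa using vNEntropy_diagonal fun _ : Unit => (1 : ℝ)

end PureState

section PartialTrace

variable {α β γ : Type*}

lemma ptraceRight_proj [Fintype β] (u : α × β → ℂ) :
    ptraceRight (proj u) = of (Function.curry u) * (of (Function.curry u))ᴴ := by
  ext i j
  simp [ptraceRight, proj, mul_apply, vecMulVec_apply]

lemma ptraceLeft_proj [Fintype α] (u : α × β → ℂ) :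
    ptraceLeft (proj u) = ((of (Function.curry u))ᴴ * of (Function.curry u))ᵀ := by
  ext i j
  simp [ptraceLeft, proj, mul_apply, vecMulVec_apply, mul_comm]

lemma trace_ptraceLeft [Fintype α] [Fintype β] (σ : Matrix (α × β) (α × β) ℂ) :
    (ptraceLeft σ).trace = σ.trace := by
  simp only [trace, diag, ptraceLeft, Fintype.sum_prod_type]
  exact Finset.sum_comm

lemma vNEntropy_ptraceLeft_proj_eq_ptraceRight [Fintype α] [DecidableEq α] [Fintype β]
    [DecidableEq β] (u : α × β → ℂ) :
    vNEntropy (ptraceLeft (proj u)) = vNEntropy (ptraceRight (proj u)) := by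
  set M := of (Function.curry u)
  rw [ptraceLeft_proj, ptraceRight_proj,
    vNEntropy_transpose (isHermitian_conjTranspose_mul_self M)]
  exact vNEntropy_eq_of_X_pow_mul_charpoly_eq (isHermitian_conjTranspose_mul_self M)
    (isHermitian_mul_conjTranspose_self M) (charpoly_mul_comm' Mᴴ M)

lemma isHermitian_ptraceLeft [Fintype α] {σ : Matrix (α × β) (α × β) ℂ} (hσ : σ.IsHermitian) :
    (ptraceLeft σ).IsHermitian := by
  ext i j
  simp only [conjTranspose_apply, ptraceLeft, star_sum, hσ.apply]

lemma QChannel.map_sum [Fintype β] [Fintype γ] (Φ : QChannel β γ) {ι : Type*} (s : Finset ι)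
    (f : ι → Matrix β β ℂ) : Φ.map (∑ i ∈ s, f i) = ∑ i ∈ s, Φ.map (f i) :=
  _root_.map_sum (AddMonoidHom.mk' Φ.map fun x y => by simpa using Φ.linear 1 1 x y) f s

lemma ptraceLeft_eq_sum [Fintype α] (σ : Matrix (α × β) (α × β) ℂ) :
    ptraceLeft σ = ∑ k : α, of fun s t => σ (k, s) (k, t) := by
  ext s t
  simp [ptraceLeft, Matrix.sum_apply]

lemma ptraceLeft_idTensor [Fintype α] [Fintype β] [Fintype γ] (Φ : QChannel β γ)
    (σ : Matrix (α × β) (α × β) ℂ) : ptraceLeft (idTensor Φ.map σ) = Φ.map (ptraceLeft σ) := by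
  ext x y
  rw [ptraceLeft_eq_sum σ, Φ.map_sum, Matrix.sum_apply]
  rfl

lemma ptraceRight_idTensor [Fintype β] [Fintype γ] (Φ : QChannel β γ)
    (σ : Matrix (α × β) (α × β) ℂ) : ptraceRight (idTensor Φ.map σ) = ptraceRight σ := by
  ext i j
  exact Φ.trace_preserving (of fun s t => σ (i, s) (j, t))

lemma one_kronecker_mul_mul_conjTranspose_apply [Fintype α] [DecidableEq α] [Fintype β]
    (V : Matrix γ β ℂ) (σ : Matrix (α × β) (α × β) ℂ) (k k' : α) (x y : γ) :
    (((1 : Matrix α α ℂ) ⊗ₖ V) * σ * ((1 : Matrix α α ℂ) ⊗ₖ V)ᴴ) (k, x) (k', y) =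
      (V * (of fun s t => σ (k, s) (k', t)) * Vᴴ) x y := by
  simp [mul_apply, Fintype.sum_prod_type, one_apply, conjTranspose_kronecker, Finset.sum_mul]

lemma one_kronecker_conjTranspose_mul_self [Fintype α] [DecidableEq α] [Fintype γ]
    [DecidableEq β] {V : Matrix γ β ℂ} (hV : Vᴴ * V = 1) :
    ((1 : Matrix α α ℂ) ⊗ₖ V)ᴴ * ((1 : Matrix α α ℂ) ⊗ₖ V) = 1 := by
  rw [conjTranspose_kronecker, conjTranspose_one, ← mul_kronecker_mul, Matrix.one_mul, hV,
    one_kronecker_one]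

lemma ptraceLeft_one_kronecker_mul_mul_conjTranspose [Fintype α] [DecidableEq α] [Fintype β]
    (V : Matrix γ β ℂ) (σ : Matrix (α × β) (α × β) ℂ) :
    ptraceLeft (((1 : Matrix α α ℂ) ⊗ₖ V) * σ * ((1 : Matrix α α ℂ) ⊗ₖ V)ᴴ) =
      V * ptraceLeft σ * Vᴴ := by
  ext x y
  simp only [ptraceLeft, one_kronecker_mul_mul_conjTranspose_apply]
  rw [ptraceLeft_eq_sum, Matrix.mul_sum, Matrix.sum_mul, Matrix.sum_apply]

lemma ptraceRight_one_kronecker_mul_mul_conjTranspose [Fintype α] [DecidableEq α] [Fintype β]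
    [DecidableEq β] [Fintype γ] {V : Matrix γ β ℂ} (hV : Vᴴ * V = 1)
    (σ : Matrix (α × β) (α × β) ℂ) :
    ptraceRight (((1 : Matrix α α ℂ) ⊗ₖ V) * σ * ((1 : Matrix α α ℂ) ⊗ₖ V)ᴴ) =
      ptraceRight σ := by
  ext k k'
  simp only [ptraceRight, one_kronecker_mul_mul_conjTranspose_apply]
  change trace (V * _ * Vᴴ) = _
  rw [trace_mul_comm, ← Matrix.mul_assoc, hV, Matrix.one_mul]
  rfl

lemma ptraceLeft_reindex_prodAssoc_kronecker [Fintype α] {L R : Type*}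
    (P : Matrix (α × L) (α × L) ℂ) (Q : Matrix R R ℂ) :
    ptraceLeft (reindex (Equiv.prodAssoc α L R) (Equiv.prodAssoc α L R) (P ⊗ₖ Q)) =
      ptraceLeft P ⊗ₖ Q := by
  ext ⟨l, r⟩ ⟨l', r'⟩
  simp [ptraceLeft, Finset.sum_mul]

lemma ptraceRight_reindex_prodAssoc_kronecker {L R : Type*} [Fintype L] [Fintype R]
    (P : Matrix (α × L) (α × L) ℂ) (Q : Matrix R R ℂ) :
    ptraceRight (reindex (Equiv.prodAssoc α L R) (Equiv.prodAssoc α L R) (P ⊗ₖ Q)) =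
      Q.trace • ptraceRight P := by
  ext k k'
  simp [ptraceRight, Fintype.sum_prod_type, trace, Finset.mul_sum, mul_comm]
  exact Finset.sum_comm

end PartialTrace

theorem coherent_information_max_of_output_product_general {a b : Type*}
    [Fintype a] [Fintype b] [DecidableEq a] [DecidableEq b]
    (Φ : QChannel b b) (ρ : Matrix b b ℂ)
    (u : a × b → ℂ) (hu : ptraceLeft (proj u) = ρ)
    (dL dR : ℕ) (V : Matrix (Fin dL × Fin dR) b ℂ)
    (hV₂ : Vᴴ * V = 1)
    (φ : a × Fin dL → ℂ) (hφ : IsUnit' φ)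
    (ρR : Matrix (Fin dR) (Fin dR) ℂ) (hρR : IsDensity ρR)
    (hform : ((1 : Matrix a a ℂ) ⊗ₖ V) * idTensor Φ.map (proj u) *
        ((1 : Matrix a a ℂ) ⊗ₖ V)ᴴ =
      Matrix.reindex (Equiv.prodAssoc a (Fin dL) (Fin dR))
        (Equiv.prodAssoc a (Fin dL) (Fin dR)) (proj φ ⊗ₖ ρR)) :
    vNEntropy (Φ.map ρ) - vNEntropy (idTensor Φ.map (proj u)) = vNEntropy ρ := by
  have hW := one_kronecker_conjTranspose_mul_self (α := a) hV₂
  have hK : (proj φ ⊗ₖ ρR).IsHermitian := (isHermitian_proj φ).kronecker hρR.1.1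
  have hσ : (idTensor Φ.map (proj u)).IsHermitian :=
    .of_mul_mul_conjTranspose hW (hform ▸ hK.submatrix _)
  have hτ1 : (ptraceLeft (proj φ)).trace = 1 := by rw [trace_ptraceLeft, trace_proj hφ]
  have hSσ : vNEntropy (idTensor Φ.map (proj u)) = vNEntropy ρR := by
    rw [← vNEntropy_mul_mul_conjTranspose hW hσ, hform, vNEntropy_reindex _ hK,
      vNEntropy_kronecker (isHermitian_proj φ) hρR.1.1 (trace_proj hφ) hρR.2, vNEntropy_proj hφ,
      zero_add]
  have hSΦρ : vNEntropy (Φ.map ρ) = vNEntropy (ptraceLeft (proj φ)) + vNEntropy ρR := by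
    have hΦρ : Φ.map ρ = ptraceLeft (idTensor Φ.map (proj u)) := by rw [ptraceLeft_idTensor, hu]
    rw [← vNEntropy_mul_mul_conjTranspose hV₂ (hΦρ ▸ isHermitian_ptraceLeft hσ), hΦρ,
      ← ptraceLeft_one_kronecker_mul_mul_conjTranspose, hform,
      ptraceLeft_reindex_prodAssoc_kronecker,
      vNEntropy_kronecker (isHermitian_ptraceLeft (isHermitian_proj φ)) hρR.1.1 hτ1 hρR.2]
  have hSρ : vNEntropy ρ = vNEntropy (ptraceLeft (proj φ)) := by
    rw [← hu, vNEntropy_ptraceLeft_proj_eq_ptraceRight, ← ptraceRight_idTensor Φ,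
      ← ptraceRight_one_kronecker_mul_mul_conjTranspose hV₂, hform,
      ptraceRight_reindex_prodAssoc_kronecker, hρR.2, one_smul,
      vNEntropy_ptraceLeft_proj_eq_ptraceRight]
  rw [hSΦρ, hSσ, hSρ, add_sub_cancel_right]

/-- if `(1_A ⊗ Φ)(|u_ρ⟩⟨u_ρ|)` is a pure state on `A ⊗ L` tensored with
a density matrix on `R`, then the coherent information attains its maximum `S(ρ)`. -/
theorem coherent_information_max_of_output_product {a b : Type*}
    [Fintype a] [Fintype b] [DecidableEq a] [DecidableEq b]
    (Φ : QChannel b b) (ρ : Matrix b b ℂ) (hρ : IsDensity ρ)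
    (u : a × b → ℂ) (hu : ptraceLeft (proj u) = ρ)
    (dL dR : ℕ) (V : Matrix (Fin dL × Fin dR) b ℂ)
    (hV₁ : V * Vᴴ = 1) (hV₂ : Vᴴ * V = 1)
    (φ : a × Fin dL → ℂ) (hφ : IsUnit' φ)
    (ρR : Matrix (Fin dR) (Fin dR) ℂ) (hρR : IsDensity ρR)
    (hform : ((1 : Matrix a a ℂ) ⊗ₖ V) * idTensor Φ.map (proj u) *
        ((1 : Matrix a a ℂ) ⊗ₖ V)ᴴ =
      Matrix.reindex (Equiv.prodAssoc a (Fin dL) (Fin dR))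
        (Equiv.prodAssoc a (Fin dL) (Fin dR)) (proj φ ⊗ₖ ρR)) :
    vNEntropy (Φ.map ρ) - vNEntropy (idTensor Φ.map (proj u)) = vNEntropy ρ :=
  coherent_information_max_of_output_product_general Φ ρ u hu dL dR V hV₂ φ hφ ρR hρR hform
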